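/- Let T be a tensor field of type (3,3) on ℂⁿ such that L_F T = 0 for every analytic vector field F on ℂⁿ. Then there exist constants c_σ ∈ ℂ, one for each permutation σ of {1,2,3}, such that T^{i₁ i₂ i₃}_{j₁ j₂ j₃} = Σ_{σ ∈ S₃} c_σ·δ^{i₁}_{j_{σ(1)}}δ^{i₂}_{j_{σ(2)}}δ^{i₃}_{j_{σ(3)}} for all i₁, i₂, i₃, j₁, j₂, j₃ ∈ {1,…,n}, where δ^i_j is the Kronecker symbol and S₃ is the symmetric group on three letters. -/

import Mathlib

/-!
Constant vector fields kill all partial derivatives of `T`, so `T` is a constant tensor `t`;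
the linear fields `x^v ∂_u` then say that `t` is annihilated by `𝔤𝔩ₙ`. Every `δ_σ` is annihilated
as well, so it suffices to find `c` for which the invariant `d = t - ∑ c_σ δ_σ` vanishes on a few
patterns, and to show that this forces `d = 0`.

Call `I` null when `d I · = 0`. At a null `I`, the relation for `x^v ∂_u` says that the rows
`d (I[b ↦ v]) ·` summed over the positions `b` with `I b = u` vanish, and the relation for
`x^v ∂_v` says that `d I J = 0` unless `I` and `J` take each value equally often.
For `n ≥ 3` take `c_σ = t(ι, ι ∘ σ⁻¹)` with `ι` injective: then `ι` is null, nullity moves along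
transpositions of values to all injective patterns, and a repeated value of `I` can be split off
into a value that `I` does not take. For `n = 2` the numbers `t(e_b, e_a)`, `e_b = Pi.single b 1`,
form a `3 × 3` matrix with constant line sums, hence a combination of permutation matrices, and
the relations reach all eight patterns from the `e_b`.
-/

open scoped BigOperators

/-- Partial derivative of `f : ℂⁿ → ℂ` in the `s`-th coordinate direction at `x`. -/
noncomputable def pderivC {n : ℕ} (f : (Fin n → ℂ) → ℂ) (s : Fin n) (x : Fin n → ℂ) : ℂ :=
  fderiv ℂ f x (Pi.single s 1)

/-- Components of the Lie derivative `L_F T` of a type-`(p,q)` tensor field `T` on `ℂⁿ`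
along the vector field `F`. -/
noncomputable def lieDeriv {n p q : ℕ} (F : Fin n → (Fin n → ℂ) → ℂ)
    (T : (Fin p → Fin n) → (Fin q → Fin n) → (Fin n → ℂ) → ℂ)
    (i : Fin p → Fin n) (j : Fin q → Fin n) (x : Fin n → ℂ) : ℂ :=
  (∑ s, F s x * pderivC (T i j) s x)
    + ∑ a : Fin q, ∑ k, T i (Function.update j a k) x * pderivC (F k) (j a) x
    - ∑ b : Fin p, ∑ l, T (Function.update i b l) j x * pderivC (F (i b)) l x

/-- Kronecker delta on `Fin n`, valued in `ℂ`. -/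
noncomputable def kron {n : ℕ} (a b : Fin n) : ℂ := if a = b then 1 else 0

open Finset Function

section LieDerivative

variable {n p q : ℕ}

lemma pderivC_const (c : ℂ) (s : Fin n) (x : Fin n → ℂ) : pderivC (fun _ => c) s x = 0 := by
  simp [pderivC]

lemma pderivC_apply (v s : Fin n) (x : Fin n → ℂ) :
    pderivC (fun y => y v) s x = if v = s then 1 else 0 := by
  rw [pderivC, show (fun y : Fin n → ℂ => y v) = ContinuousLinearMap.proj (R := ℂ) v from rfl,
    ContinuousLinearMap.fderiv]
  simp [Pi.single_apply]

variable {T : (Fin p → Fin n) → (Fin q → Fin n) → (Fin n → ℂ) → ℂ}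

lemma pderivC_eq_zero_of_lieDeriv_eq_zero
    (hT : ∀ F : Fin n → (Fin n → ℂ) → ℂ, (∀ s, AnalyticOnNhd ℂ (F s) Set.univ) →
      ∀ i j x, lieDeriv F T i j x = 0)
    (i : Fin p → Fin n) (j : Fin q → Fin n) (s : Fin n) (x : Fin n → ℂ) :
    pderivC (T i j) s x = 0 := by
  have h := hT (fun k _ => if k = s then 1 else 0) (fun _ => analyticOnNhd_const) i j x
  simpa [lieDeriv, pderivC_const] using h

lemma eq_of_lieDeriv_eq_zero (hTan : ∀ i j, AnalyticOnNhd ℂ (T i j) Set.univ)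
    (hT : ∀ F : Fin n → (Fin n → ℂ) → ℂ, (∀ s, AnalyticOnNhd ℂ (F s) Set.univ) →
      ∀ i j x, lieDeriv F T i j x = 0)
    (i : Fin p → Fin n) (j : Fin q → Fin n) (x y : Fin n → ℂ) : T i j x = T i j y :=
  is_const_of_fderiv_eq_zero (fun z => (hTan i j z trivial).differentiableAt)
    (fun z => ContinuousLinearMap.coe_injective ((Pi.basisFun ℂ (Fin n)).ext fun s => by
      simpa [pderivC] using pderivC_eq_zero_of_lieDeriv_eq_zero hT i j s z)) x y

end LieDerivative

/-- `L_F t = 0` for the linear field `F = x^v ∂_u`, written out for a constant tensor `t`. -/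
def IsGlInvariant {n p q : ℕ} (t : (Fin p → Fin n) → (Fin q → Fin n) → ℂ) : Prop :=
  ∀ (u v : Fin n) (i : Fin p → Fin n) (j : Fin q → Fin n),
    ∑ a ∈ univ.filter (j · = v), t i (update j a u) =
      ∑ b ∈ univ.filter (i · = u), t (update i b v) j

lemma isGlInvariant_of_lieDeriv_eq_zero {n p q : ℕ}
    {T : (Fin p → Fin n) → (Fin q → Fin n) → (Fin n → ℂ) → ℂ}
    (hT : ∀ F : Fin n → (Fin n → ℂ) → ℂ, (∀ s, AnalyticOnNhd ℂ (F s) Set.univ) →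
      ∀ i j x, lieDeriv F T i j x = 0) (x : Fin n → ℂ) :
    IsGlInvariant (fun i j => T i j x) := by
  intro u v i j
  have hF : ∀ k, AnalyticOnNhd ℂ (fun y : Fin n → ℂ => if k = u then y v else 0) Set.univ := by
    intro k
    split_ifs
    · exact (ContinuousLinearMap.proj (R := ℂ) (φ := fun _ : Fin n => ℂ) v).analyticOnNhd _
    · exact analyticOnNhd_const
  have hpd : ∀ k m, pderivC (fun y : Fin n → ℂ => if k = u then y v else 0) m x =
      if k = u ∧ v = m then 1 else 0 := by
    intro k m
    by_cases hk : k = u <;> simp [hk, pderivC_apply, pderivC_const]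
  have h := hT _ hF i j x
  simp only [lieDeriv, hpd, pderivC_eq_zero_of_lieDeriv_eq_zero hT, mul_zero, sum_const_zero,
    zero_add, sub_eq_zero] at h
  simpa [sum_filter, eq_comm, ite_and] using h

namespace IsGlInvariant

variable {n p q : ℕ} {t : (Fin p → Fin n) → (Fin q → Fin n) → ℂ}

lemma transpose (ht : IsGlInvariant t) : IsGlInvariant (fun j i => t i j) :=
  fun u v j i => (ht v u i j).symm

lemma sub_sum {ι : Type*} [Fintype ι] (ht : IsGlInvariant t)
    {s : ι → (Fin p → Fin n) → (Fin q → Fin n) → ℂ} (hs : ∀ r, IsGlInvariant (s r)) (c : ι → ℂ) :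
    IsGlInvariant (fun i j => t i j - ∑ r, c r * s r i j) := by
  intro u v i j
  simp only [sum_sub_distrib, ht u v i j, sub_right_inj]
  rw [sum_comm, sum_comm (s := univ.filter _)]
  simp only [← mul_sum, hs _ u v i j]

/-- Weight argument: `x^v ∂_v` acts on `t i j` by the difference of the multiplicities of `v`. -/
lemma card_filter_eq (ht : IsGlInvariant t) {i : Fin p → Fin n} {j : Fin q → Fin n}
    (hij : t i j ≠ 0) (v : Fin n) : #{a | i a = v} = #{a | j a = v} := by
  have hcount : ∀ {r : ℕ} (w : Fin r → Fin n) (f : (Fin r → Fin n) → ℂ),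
      ∑ a ∈ univ.filter (w · = v), f (update w a v) = #{a | w a = v} * f w := by
    intro r w f
    rw [sum_congr rfl fun a ha => by rw [update_eq_self_iff.mpr (mem_filter.mp ha).2.symm],
      sum_const, nsmul_eq_mul]
  have h := ht v v i j
  rw [hcount j (t i), hcount i (t · j)] at h
  exact_mod_cast (mul_right_cancel₀ hij h).symm

variable {I : Fin p → Fin n}

lemma sum_update_eq_zero (ht : IsGlInvariant t) (hI : ∀ J, t I J = 0) (u v : Fin n)
    (J : Fin q → Fin n) : ∑ b ∈ univ.filter (I · = u), t (update I b v) J = 0 := by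
  rw [← ht, sum_eq_zero fun _ _ => hI _]

lemma update_eq_zero (ht : IsGlInvariant t) (hI : ∀ J, t I J = 0) {b : Fin p}
    (hb : ∀ b', I b' = I b → b' = b) (v : Fin n) (J : Fin q → Fin n) :
    t (update I b v) J = 0 := by
  have h := ht.sum_update_eq_zero hI (I b) v J
  rwa [show univ.filter (I · = I b) = {b} by ext; simpa using ⟨hb _, fun h => h ▸ rfl⟩,
    sum_singleton] at h

lemma update_add_update_eq_zero (ht : IsGlInvariant t) (hI : ∀ J, t I J = 0) {b₁ b₂ : Fin p}
    (hb : b₁ ≠ b₂) {u : Fin n} (hu : ∀ b, I b = u ↔ b = b₁ ∨ b = b₂) (v : Fin n)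
    (J : Fin q → Fin n) : t (update I b₁ v) J + t (update I b₂ v) J = 0 := by
  have h := ht.sum_update_eq_zero hI u v J
  rwa [show univ.filter (I · = u) = {b₁, b₂} by ext; simp [hu], sum_pair hb] at h

end IsGlInvariant

section DeltaTensor

variable {n k : ℕ}

noncomputable def deltaTensor (σ : Equiv.Perm (Fin k)) (i j : Fin k → Fin n) : ℂ :=
  ∏ a, kron (i a) (j (σ a))

lemma deltaTensor_eq (σ : Equiv.Perm (Fin k)) (i j : Fin k → Fin n) :
    deltaTensor σ i j = if i = j ∘ σ then 1 else 0 := by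
  simp [deltaTensor, kron, prod_boole, funext_iff]

lemma isGlInvariant_deltaTensor (σ : Equiv.Perm (Fin k)) :
    IsGlInvariant (deltaTensor (n := n) σ) := by
  intro u v i j
  simp only [deltaTensor_eq, sum_filter, ← ite_and]
  rw [← Equiv.sum_comp σ]
  refine sum_congr rfl fun b _ => if_congr ?_ rfl rfl
  rw [update_comp_equiv, Equiv.symm_apply_apply, eq_update_iff, update_eq_iff]
  simp only [comp_apply]
  exact ⟨fun ⟨h₁, h₂, h₃⟩ => ⟨h₂, h₁.symm, h₃⟩, fun ⟨h₁, h₂, h₃⟩ => ⟨h₂.symm, h₁, h₃⟩⟩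

lemma deltaTensor_comp_perm {ι : Fin k → Fin n} (hι : Injective ι) (σ π : Equiv.Perm (Fin k)) :
    deltaTensor σ ι (ι ∘ π) = if σ = π⁻¹ then 1 else 0 := by
  rw [deltaTensor_eq]
  refine if_congr ⟨fun h => Equiv.ext fun a => ?_, fun h => ?_⟩ rfl rfl
  · rw [Equiv.Perm.eq_inv_iff_eq]
    exact (hι (congrFun h a)).symm
  · simp [h, comp_assoc]

lemma deltaTensor_single (σ : Equiv.Perm (Fin k)) (b a : Fin k) :
    deltaTensor σ (Pi.single b 1 : Fin k → Fin 2) (Pi.single a 1) = if σ b = a then 1 else 0 := by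
  rw [deltaTensor_eq, Pi.single_comp_equiv]
  refine if_congr ⟨fun h => ?_, fun h => ?_⟩ rfl rfl
  · simpa [Pi.single_apply, Equiv.eq_symm_apply] using congrFun h b
  · rw [← h, Equiv.symm_apply_apply]

end DeltaTensor

section Relabelling

variable {β α : Type*} [DecidableEq α]

lemma exists_perm_eq_comp_of_card_filter_eq [Fintype β] {ι J : β → α} (hι : Injective ι)
    (h : ∀ v, #{b | ι b = v} = #{b | J b = v}) : ∃ π : Equiv.Perm β, J = ι ∘ π := by
  have hmem : ∀ a, ∃ b, ι b = J a := fun a => by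
    have : 0 < #{b | ι b = J a} := h (J a) ▸ card_pos.mpr ⟨a, by simp⟩
    obtain ⟨b, hb⟩ := card_pos.mp this
    exact ⟨b, (mem_filter.mp hb).2⟩
  choose f hf using hmem
  have hJ : Injective J := fun a a' haa' => by
    have : #{b | J b = J a} ≤ 1 := h (J a) ▸ card_le_one.mpr fun b hb b' hb' =>
      hι ((mem_filter.mp hb).2.trans (mem_filter.mp hb').2.symm)
    exact card_le_one.mp this a (by simp) a' (by simp [haa'])
  have hf_inj : Injective f := fun a a' haa' => hJ (by rw [← hf, ← hf, haa'])
  exact ⟨Equiv.ofBijective f (Finite.injective_iff_bijective.mp hf_inj),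
    funext fun a => (hf a).symm⟩

variable [DecidableEq β] {I : β → α}

lemma swap_comp_eq_update (hI : Injective I) (b : β) {v : α} (hv : ∀ a, I a ≠ v) :
    Equiv.swap (I b) v ∘ I = update I b v := by
  funext a
  rcases eq_or_ne a b with rfl | hab
  · simp
  · rw [update_of_ne hab, comp_apply, Equiv.swap_apply_of_ne_of_ne (hI.ne hab) (hv a)]

lemma swap_comp_eq_update_update (hI : Injective I) {b₁ b₂ : β} (hb : b₁ ≠ b₂) :
    Equiv.swap (I b₁) (I b₂) ∘ I = update (update I b₁ (I b₂)) b₂ (I b₁) := by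
  funext a
  rcases eq_or_ne a b₂ with rfl | ha₂
  · simp
  rcases eq_or_ne a b₁ with rfl | ha₁
  · simp [ha₂]
  · rw [update_of_ne ha₂, update_of_ne ha₁, comp_apply,
      Equiv.swap_apply_of_ne_of_ne (hI.ne ha₁) (hI.ne ha₂)]

lemma image_update_eq_insert [Fintype β] {b₁ b₂ : β} (hb : b₁ ≠ b₂) (h12 : I b₁ = I b₂) (w : α) :
    univ.image (update I b₁ w) = insert w (univ.image I) := by
  ext x
  simp only [mem_image, mem_univ, true_and, mem_insert]
  constructor
  · rintro ⟨a, rfl⟩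
    rcases eq_or_ne a b₁ with rfl | ha
    · simp
    · exact Or.inr ⟨a, (update_of_ne ha _ _).symm⟩
  · rintro (rfl | ⟨a, rfl⟩)
    · exact ⟨b₁, update_self _ _ _⟩
    rcases eq_or_ne a b₁ with rfl | ha
    · exact ⟨b₂, by rw [update_of_ne hb.symm, h12]⟩
    · exact ⟨a, update_of_ne ha _ _⟩

end Relabelling

namespace IsGlInvariant

variable {n k : ℕ} {d : (Fin k → Fin n) → (Fin k → Fin n) → ℂ} {I ι : Fin k → Fin n}

lemma eq_zero_of_forall_perm (hd : IsGlInvariant d) (hι : Injective ι)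
    (h : ∀ π : Equiv.Perm (Fin k), d ι (ι ∘ π) = 0) (J : Fin k → Fin n) : d ι J = 0 := by
  by_contra hJ
  obtain ⟨π, rfl⟩ := exists_perm_eq_comp_of_card_filter_eq hι (hd.card_filter_eq hJ)
  exact hJ (h π)

lemma swap_comp_eq_zero (hd : IsGlInvariant d) (hI : ∀ J, d I J = 0) (hinj : Injective I)
    {u v : Fin n} (huv : u ≠ v) (J : Fin k → Fin n) : d (Equiv.swap u v ∘ I) J = 0 := by
  by_cases hu : u ∈ Set.range I <;> by_cases hv : v ∈ Set.range I
  · obtain ⟨b₁, rfl⟩ := hu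
    obtain ⟨b₂, rfl⟩ := hv
    have hb : b₁ ≠ b₂ := fun h => huv (congrArg I h)
    -- `I b₂` sits at both `b₁` and `b₂` of the null pattern `I[b₁ ↦ I b₂]`, so one relation
    -- there ties the row of `I` to the row of the swapped pattern
    have hK := hd.update_eq_zero hI (b := b₁) (fun _ h => hinj h) (I b₂)
    have h := hd.update_add_update_eq_zero hK hb (u := I b₂)
      (fun b => by rcases eq_or_ne b b₁ with rfl | h <;> simp [update_of_ne, hinj.eq_iff, *])
      (I b₁) J
    rwa [update_idem, update_eq_self, hI, zero_add, ← swap_comp_eq_update_update hinj hb] at h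
  · obtain ⟨b, rfl⟩ := hu
    rw [swap_comp_eq_update hinj b fun a h => hv ⟨a, h⟩]
    exact hd.update_eq_zero hI (fun _ h => hinj h) v J
  · obtain ⟨b, rfl⟩ := hv
    rw [Equiv.swap_comm, swap_comp_eq_update hinj b fun a h => hu ⟨a, h⟩]
    exact hd.update_eq_zero hI (fun _ h => hinj h) u J
  · convert hI J using 2
    funext a
    exact Equiv.swap_apply_of_ne_of_ne (fun h => hu ⟨a, h⟩) (fun h => hv ⟨a, h⟩)

lemma perm_comp_eq_zero (hd : IsGlInvariant d) (hI : ∀ J, d I J = 0) (hinj : Injective I)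
    (τ : Equiv.Perm (Fin n)) (J : Fin k → Fin n) : d (τ ∘ I) J = 0 := by
  induction τ using Equiv.Perm.swap_induction_on generalizing J with
  | one => exact hI J
  | swap_mul τ u v huv ih => exact hd.swap_comp_eq_zero ih (τ.injective.comp hinj) huv J

lemma eq_zero_of_injective_left (hd : IsGlInvariant d) (hι : Injective ι)
    (hι₀ : ∀ J, d ι J = 0) (hI : Injective I) (J : Fin k → Fin n) : d I J = 0 := by
  obtain ⟨τ, hτ⟩ := Equiv.Perm.exists_extending_pair ι I hι hI
  rw [show I = τ ∘ ι from funext fun a => (hτ a).symm]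
  exact hd.perm_comp_eq_zero hι₀ hι τ J

lemma eq_zero_of_injective (hd : IsGlInvariant d) (hι : Injective ι) (hι₀ : ∀ J, d ι J = 0)
    (I J : Fin k → Fin n) : d I J = 0 := by
  have hkn : k ≤ n := by simpa using Fintype.card_le_of_injective ι hι
  induction hm : k - #(univ.image I) generalizing I J with
  | zero =>
    refine hd.eq_zero_of_injective_left hι hι₀ (fun a b h => ?_) J
    have : #(univ.image I) = #(univ : Finset (Fin k)) :=
      le_antisymm card_image_le (by simp; omega)
    exact card_image_iff.mp this (mem_univ a) (mem_univ b) h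
  | succ m ih =>
    -- split a repeated value `I b₁ = I b₂` off into a value `w` that `I` does not take
    obtain ⟨b₁, b₂, h12, hb⟩ := not_injective_iff.mp fun h : Injective I => by
      simp [card_image_of_injective _ h] at hm
    obtain ⟨w, -, hw⟩ := exists_mem_notMem_of_card_lt_card (t := univ)
      (s := univ.image I) (by simp; omega)
    have hw' : ∀ a, I a ≠ w := fun a h => hw (mem_image.mpr ⟨a, mem_univ a, h⟩)
    have hI' := fun J => ih (update I b₁ w) J
      (by rw [image_update_eq_insert hb h12, card_insert_of_notMem hw]; omega)
    have h := hd.update_eq_zero hI' (b := b₁)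
      (fun b h => by_contra fun hb' => hw' b (by rwa [update_of_ne hb', update_self] at h))
      (I b₁) J
    rwa [update_idem, update_eq_self] at h

theorem exists_eq_sum_deltaTensor_of_le {t : (Fin k → Fin n) → (Fin k → Fin n) → ℂ}
    (ht : IsGlInvariant t) (hkn : k ≤ n) :
    ∃ c : Equiv.Perm (Fin k) → ℂ, ∀ i j, t i j = ∑ σ, c σ * deltaTensor σ i j := by
  obtain ⟨ι, hι⟩ : ∃ ι : Fin k → Fin n, Injective ι :=
    ⟨Fin.castLE hkn, Fin.castLE_injective hkn⟩
  refine ⟨fun σ => t ι (ι ∘ ⇑σ⁻¹), fun i j => sub_eq_zero.mp ?_⟩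
  have hd := ht.sub_sum isGlInvariant_deltaTensor fun σ => t ι (ι ∘ ⇑σ⁻¹)
  refine hd.eq_zero_of_injective hι (hd.eq_zero_of_forall_perm hι fun π => ?_) i j
  simp [deltaTensor_comp_perm hι, Equiv.Perm.inv_def]

end IsGlInvariant

lemma exists_sum_perm_of_line_sums (M : Fin 3 → Fin 3 → ℂ) (s : ℂ) (hrow : ∀ b, ∑ a, M b a = s)
    (hcol : ∀ a, ∑ b, M b a = s) :
    ∃ c : Equiv.Perm (Fin 3) → ℂ, ∀ b a, M b a = ∑ σ, c σ * if σ b = a then 1 else 0 := by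
  -- the six permutation matrices satisfy a single linear relation, so five of them suffice
  refine ⟨Pi.single 1 (M 0 0) + Pi.single (finRotate 3) (M 1 2)
    + Pi.single (finRotate 3)⁻¹ (M 2 1) + Pi.single (Equiv.swap 0 1) (M 2 2 - M 0 0)
    + Pi.single (Equiv.swap 0 2) (M 1 1 - M 0 0), fun b a => ?_⟩
  simp only [Pi.add_apply, add_mul, sum_add_distrib, Pi.single_apply, ite_mul, zero_mul,
    sum_ite_eq', mem_univ, if_true]
  simp only [Fin.sum_univ_three] at hrow hcol
  fin_cases b <;> fin_cases a <;> simp +decide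
  · linear_combination hrow 0 - hcol 2
  · linear_combination hrow 0 - hcol 1
  · linear_combination hcol 0 - hrow 2
  · linear_combination hcol 0 - hrow 1

namespace IsGlInvariant

lemma sum_apply_single {k : ℕ} {t : (Fin k → Fin 2) → (Fin k → Fin 2) → ℂ}
    (ht : IsGlInvariant t) (b : Fin k) : ∑ a, t (Pi.single b 1) (Pi.single a 1) = t 0 0 := by
  have h := ht 1 0 (Pi.single b 1) 0
  simp only [Pi.zero_apply, filter_true, Pi.single_apply, ite_eq_left_iff, zero_ne_one, imp_false,
    Decidable.not_not, filter_eq', mem_univ, if_true, sum_singleton] at h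
  have h0 : update (Pi.single b 1 : Fin k → Fin 2) b 0 = 0 := by
    rw [Pi.single, update_idem]
    exact update_eq_self b 0
  rwa [h0] at h

variable {d : (Fin 3 → Fin 2) → (Fin 3 → Fin 2) → ℂ}

lemma apply_single_left_eq_zero (hd : IsGlInvariant d)
    (h : ∀ b a, d (Pi.single b 1) (Pi.single a 1) = 0) (b : Fin 3) (J : Fin 3 → Fin 2) :
    d (Pi.single b 1) J = 0 := by
  have hcount : ∀ (b : Fin 3) (J : Fin 3 → Fin 2),
      #{a | (Pi.single b 1 : Fin 3 → Fin 2) a = 1} = #{a | J a = 1} → ∃ a, J = Pi.single a 1 := by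
    decide
  by_contra hJ
  obtain ⟨a, rfl⟩ := hcount b J (hd.card_filter_eq hJ 1)
  exact hJ (h b a)

lemma eq_zero_of_apply_single (hd : IsGlInvariant d)
    (h : ∀ b a, d (Pi.single b 1) (Pi.single a 1) = 0) (I J : Fin 3 → Fin 2) : d I J = 0 := by
  have hsingle := hd.apply_single_left_eq_zero h
  have h₀ := hd.update_add_update_eq_zero (hsingle 0) (b₁ := 1) (b₂ := 2) (u := 0)
    (by decide) (by decide) 1
  have h₁ := hd.update_add_update_eq_zero (hsingle 1) (b₁ := 0) (b₂ := 2) (u := 0)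
    (by decide) (by decide) 1
  have h₂ := hd.update_add_update_eq_zero (hsingle 2) (b₁ := 0) (b₂ := 1) (u := 0)
    (by decide) (by decide) 1
  simp only [show update (Pi.single 0 1 : Fin 3 → Fin 2) 1 1 = ![1, 1, 0] by decide,
    show update (Pi.single 0 1 : Fin 3 → Fin 2) 2 1 = ![1, 0, 1] by decide,
    show update (Pi.single 1 1 : Fin 3 → Fin 2) 0 1 = ![1, 1, 0] by decide,
    show update (Pi.single 1 1 : Fin 3 → Fin 2) 2 1 = ![0, 1, 1] by decide,
    show update (Pi.single 2 1 : Fin 3 → Fin 2) 0 1 = ![1, 0, 1] by decide,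
    show update (Pi.single 2 1 : Fin 3 → Fin 2) 1 1 = ![0, 1, 1] by decide] at h₀ h₁ h₂
  have h011 : ∀ J, d ![0, 1, 1] J = 0 := fun J => by
    linear_combination (h₁ J + h₂ J - h₀ J) / 2
  have h101 : ∀ J, d ![1, 0, 1] J = 0 := fun J => by
    linear_combination (h₀ J + h₂ J - h₁ J) / 2
  have h110 : ∀ J, d ![1, 1, 0] J = 0 := fun J => by
    linear_combination (h₀ J + h₁ J - h₂ J) / 2
  have h000 : ∀ J, d 0 J = 0 := by
    simpa [show update (Pi.single 0 1 : Fin 3 → Fin 2) 0 0 = 0 by decide] using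
      hd.update_eq_zero (hsingle 0) (b := 0) (by decide) 0
  have h111 : ∀ J, d ![1, 1, 1] J = 0 := by
    simpa [show update ![(0 : Fin 2), 1, 1] 0 1 = ![1, 1, 1] by decide] using
      hd.update_eq_zero h011 (b := 0) (by decide) 1
  obtain rfl | rfl | rfl | rfl | rfl | rfl | rfl | rfl : I = 0 ∨ I = Pi.single 0 1 ∨
      I = Pi.single 1 1 ∨ I = Pi.single 2 1 ∨ I = ![0, 1, 1] ∨ I = ![1, 0, 1] ∨ I = ![1, 1, 0] ∨
      I = ![1, 1, 1] := by
    revert I; decide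
  exacts [h000 J, hsingle 0 J, hsingle 1 J, hsingle 2 J, h011 J, h101 J, h110 J, h111 J]

theorem exists_eq_sum_deltaTensor_of_two {t : (Fin 3 → Fin 2) → (Fin 3 → Fin 2) → ℂ}
    (ht : IsGlInvariant t) :
    ∃ c : Equiv.Perm (Fin 3) → ℂ, ∀ i j, t i j = ∑ σ, c σ * deltaTensor σ i j := by
  obtain ⟨c, hc⟩ := exists_sum_perm_of_line_sums (fun b a => t (Pi.single b 1) (Pi.single a 1))
    (t 0 0) ht.sum_apply_single ht.transpose.sum_apply_single
  have hd := ht.sub_sum isGlInvariant_deltaTensor c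
  refine ⟨c, fun i j => sub_eq_zero.mp (hd.eq_zero_of_apply_single (fun b a => ?_) i j)⟩
  simp only [hc b a, deltaTensor_single, sub_self]

theorem exists_eq_sum_deltaTensor {n : ℕ} {t : (Fin 3 → Fin n) → (Fin 3 → Fin n) → ℂ}
    (ht : IsGlInvariant t) :
    ∃ c : Equiv.Perm (Fin 3) → ℂ, ∀ i j, t i j = ∑ σ, c σ * deltaTensor σ i j :=
  match n, t, ht with
  | 0, _, _ => ⟨0, fun i => (i 0).elim0⟩
  | 1, t, _ => ⟨Pi.single 1 (t 0 0), fun i j => by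
      simp [Subsingleton.elim i 0, Subsingleton.elim j 0, deltaTensor_eq]⟩
  | 2, _, ht => ht.exists_eq_sum_deltaTensor_of_two
  | _ + 3, _, ht => ht.exists_eq_sum_deltaTensor_of_le (by omega)

end IsGlInvariant

/-- A type-`(3,3)` tensor field on `ℂⁿ` whose Lie derivative vanishes
along every analytic vector field is a constant combination
`Σ_{σ ∈ S₃} c_σ δ^{i₁}_{j_{σ(1)}} δ^{i₂}_{j_{σ(2)}} δ^{i₃}_{j_{σ(3)}}`. -/
theorem trivial_tensor_invariant_three_three {n : ℕ}
    (T : (Fin 3 → Fin n) → (Fin 3 → Fin n) → (Fin n → ℂ) → ℂ)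
    (hTan : ∀ i j, AnalyticOnNhd ℂ (T i j) Set.univ)
    (htriv : ∀ F : Fin n → (Fin n → ℂ) → ℂ,
      (∀ s, AnalyticOnNhd ℂ (F s) Set.univ) →
      ∀ i j x, lieDeriv F T i j x = 0) :
    ∃ c : Equiv.Perm (Fin 3) → ℂ, ∀ (i j : Fin 3 → Fin n) (x : Fin n → ℂ),
      T i j x = ∑ σ : Equiv.Perm (Fin 3), c σ * ∏ a : Fin 3, kron (i a) (j (σ a)) := by
  obtain ⟨c, hc⟩ := (isGlInvariant_of_lieDeriv_eq_zero htriv 0).exists_eq_sum_deltaTensor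
  exact ⟨c, fun i j x => (eq_of_lieDeriv_eq_zero hTan htriv i j x 0).trans (hc i j)⟩
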